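/- Let ℓ : [0,τ] → ℝ satisfy ℓ(ε) > 0 for ε > 0 and ℓ(ε) → 0 as ε ↓ 0. Let L : [0,τ] × E × E → ℝ be a Lagrangian such that for every ε ≥ 0 and v ∈ E, L(ε, u_ε, v) = j(ε) (independent of v, since u_ε solves the state equation), and such that ∂_u L(0, u_0, p_0) = 0 (p_0 is the adjoint state). Assume L(ε, ·, p_0) is C^1 along the segment from u_0 to u_ε. If the three limits R_1(u_0,p_0) = lim_{ε↓0} (1/ℓ(ε)) ∫_0^1 [∂_u L(ε, s u_ε + (1−s) u_0, p_0) − ∂_u L(ε, u_0, p_0)](u_ε − u_0) ds, R_2(u_0,p_0) = lim_{ε↓0} (1/ℓ(ε)) [∂_u L(ε, u_0, p_0) − ∂_u L(0, u_0, p_0)](u_ε − u_0), and ∂_ℓ L(0,u_0,p_0) = lim_{ε↓0} (1/ℓ(ε)) [L(ε, u_0, p_0) − L(0, u_0, p_0)] all exist, then j(ε) = j(0) + ℓ(ε)·(R_1(u_0,p_0) + R_2(u_0,p_0) + ∂_ℓ L(0,u_0,p_0)) + o(ℓ(ε)) as ε ↓ 0. -/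

import Mathlib

/-! By the fundamental theorem of calculus along the segment from `u₀` to `u_ε`,
`j ε - j 0 = L(ε, u_ε, p₀) - L(0, u₀, p₀)` splits exactly into the three numerators of `R₁`, `R₂`
and `∂_ℓ L`, the leftover term `∂_u L(0, u₀, p₀)(u_ε - u₀)` vanishing by the adjoint equation.
Dividing by `ℓ ε > 0` and letting `ε ↓ 0` gives the expansion. -/

open Filter intervalIntegral

theorem hasDerivAt_smul_add_one_sub_smul {E : Type*} [NormedAddCommGroup E] [NormedSpace ℝ E]
    (x y : E) (s : ℝ) :
    HasDerivAt (fun t : ℝ => t • y + (1 - t) • x) (y - x) s := by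
  simpa [sub_eq_add_neg] using
    ((hasDerivAt_id s).smul_const y).fun_add (((hasDerivAt_id s).const_sub 1).smul_const x)

theorem sub_sub_apply_eq_integral_segment {E F : Type*} [NormedAddCommGroup E]
    [NormedSpace ℝ E] [NormedAddCommGroup F] [NormedSpace ℝ F] [CompleteSpace F]
    {f : E → F} {f' : ℝ → E →L[ℝ] F} {x y : E} (A : E →L[ℝ] F)
    (hf : ∀ s ∈ Set.Icc (0:ℝ) 1, HasFDerivAt f (f' s) (s • y + (1 - s) • x))
    (hf' : ContinuousOn f' (Set.Icc 0 1)) :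
    f y - f x - A (y - x) = ∫ s in (0:ℝ)..1, (f' s (y - x) - A (y - x)) := by
  have hderiv : ∀ s ∈ Set.uIcc (0:ℝ) 1,
      HasDerivAt (fun t : ℝ => f (t • y + (1 - t) • x)) (f' s (y - x)) s := fun s hs =>
    (hf s (by rwa [Set.uIcc_of_le zero_le_one] at hs)).comp_hasDerivAt s
      (hasDerivAt_smul_add_one_sub_smul x y s)
  have hint : IntervalIntegrable (fun s => f' s (y - x)) MeasureTheory.volume 0 1 :=
    (hf'.clm_apply continuousOn_const).intervalIntegrable_of_Icc zero_le_one
  rw [integral_sub hint intervalIntegrable_const, integral_eq_sub_of_hasDerivAt hderiv hint,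
    integral_const]
  simp

theorem Asymptotics.isLittleO_sub_mul_of_tendsto_inv_mul {α : Type*} {l : Filter α}
    {ℓ g : α → ℝ} {c : ℝ} (hℓ : ∀ᶠ a in l, ℓ a ≠ 0)
    (h : Tendsto (fun a => (ℓ a)⁻¹ * g a) l (nhds c)) :
    (fun a => g a - ℓ a * c) =o[l] ℓ := by
  rw [Asymptotics.isLittleO_iff_tendsto' (hℓ.mono fun a ha h0 => absurd h0 ha)]
  have hlim : Tendsto (fun a => (ℓ a)⁻¹ * g a - c) l (nhds 0) := by simpa using h.sub_const c
  refine hlim.congr' ?_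
  filter_upwards [hℓ] with a ha
  field_simp

theorem delfour_topological_expansion_general
    {E : Type*} [NormedAddCommGroup E] [NormedSpace ℝ E]
    (τ : ℝ) (hτ : 0 < τ)
    (ℓ : ℝ → ℝ) (hℓpos : ∀ ε, 0 < ε → 0 < ℓ ε)
    (L : ℝ → E → E → ℝ) (L' : ℝ → E → E → (E →L[ℝ] ℝ))
    (u : ℝ → E) (p₀ : E) (j : ℝ → ℝ)
    -- the reduced cost: L(ε, u_ε, v) = j(ε) independently of v
    (hstate : ∀ ε ∈ Set.Icc (0:ℝ) τ, ∀ v : E, L ε (u ε) v = j ε)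
    -- p₀ is the adjoint state: ∂_u L(0, u₀, p₀) = 0
    (hadj : L' 0 (u 0) p₀ = 0)
    -- L(ε, ·, p₀) is C¹ along the segment from u₀ to u_ε, with derivative L'
    (hderiv : ∀ ε ∈ Set.Icc (0:ℝ) τ, ∀ s ∈ Set.Icc (0:ℝ) 1,
      HasFDerivAt (fun w => L ε w p₀) (L' ε (s • u ε + (1 - s) • u 0) p₀)
        (s • u ε + (1 - s) • u 0))
    (hcont : ∀ ε ∈ Set.Icc (0:ℝ) τ,
      ContinuousOn (fun s : ℝ => L' ε (s • u ε + (1 - s) • u 0) p₀) (Set.Icc 0 1))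
    (R₁ R₂ dℓL : ℝ)
    (hR₁ : Tendsto (fun ε => (1 / ℓ ε) *
        ∫ s in (0:ℝ)..1,
          (L' ε (s • u ε + (1 - s) • u 0) p₀ (u ε - u 0) - L' ε (u 0) p₀ (u ε - u 0)))
      (nhdsWithin 0 (Set.Ioi 0)) (nhds R₁))
    (hR₂ : Tendsto (fun ε => (1 / ℓ ε) *
        (L' ε (u 0) p₀ (u ε - u 0) - L' 0 (u 0) p₀ (u ε - u 0)))
      (nhdsWithin 0 (Set.Ioi 0)) (nhds R₂))
    (hdℓ : Tendsto (fun ε => (1 / ℓ ε) * (L ε (u 0) p₀ - L 0 (u 0) p₀))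
      (nhdsWithin 0 (Set.Ioi 0)) (nhds dℓL)) :
    (fun ε => j ε - j 0 - ℓ ε * (R₁ + R₂ + dℓL))
      =o[nhdsWithin 0 (Set.Ioi 0)] ℓ := by
  have hτ_mem : Set.Ioc (0:ℝ) τ ∈ nhdsWithin 0 (Set.Ioi 0) :=
    mem_of_superset (Ioo_mem_nhdsGT hτ) Set.Ioo_subset_Ioc_self
  have hsplit : ∀ ε ∈ Set.Ioc (0:ℝ) τ, j ε - j 0 =
      (∫ s in (0:ℝ)..1,
          (L' ε (s • u ε + (1 - s) • u 0) p₀ (u ε - u 0) - L' ε (u 0) p₀ (u ε - u 0)))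
        + (L' ε (u 0) p₀ (u ε - u 0) - L' 0 (u 0) p₀ (u ε - u 0))
        + (L ε (u 0) p₀ - L 0 (u 0) p₀) := by
    intro ε hε
    have hε' : ε ∈ Set.Icc (0:ℝ) τ := Set.Ioc_subset_Icc_self hε
    have hremainder := sub_sub_apply_eq_integral_segment (L' ε (u 0) p₀) (hderiv ε hε')
      (hcont ε hε')
    rw [← hremainder, hadj, ← hstate ε hε' p₀, ← hstate 0 ⟨le_rfl, hτ.le⟩ p₀,
      zero_apply]
    ring
  refine Asymptotics.isLittleO_sub_mul_of_tendsto_inv_mul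
    (eventually_mem_nhdsWithin.mono fun ε hε => (hℓpos ε hε).ne') ?_
  refine ((hR₁.add hR₂).add hdℓ).congr' ?_
  filter_upwards [hτ_mem] with ε hε
  rw [hsplit ε hε]
  ring

/-- Delfour's Lagrangian theorem for first topological derivatives: under existence of the
three limits `R₁`, `R₂`, `∂_ℓ L(0,u₀,p₀)`, the reduced cost `j(ε) = L(ε, u_ε, v)` admits
the expansion `j(ε) = j(0) + ℓ(ε)(R₁ + R₂ + ∂_ℓL) + o(ℓ(ε))` as `ε ↓ 0`. -/
theorem delfour_topological_expansion
    {E : Type*} [NormedAddCommGroup E] [NormedSpace ℝ E]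
    (τ : ℝ) (hτ : 0 < τ)
    (ℓ : ℝ → ℝ) (hℓpos : ∀ ε, 0 < ε → 0 < ℓ ε)
    (hℓ0 : Tendsto ℓ (nhdsWithin 0 (Set.Ioi 0)) (nhds 0))
    (L : ℝ → E → E → ℝ) (L' : ℝ → E → E → (E →L[ℝ] ℝ))
    (u : ℝ → E) (p₀ : E) (j : ℝ → ℝ)
    -- the reduced cost: L(ε, u_ε, v) = j(ε) independently of v
    (hstate : ∀ ε ∈ Set.Icc (0:ℝ) τ, ∀ v : E, L ε (u ε) v = j ε)
    -- p₀ is the adjoint state: ∂_u L(0, u₀, p₀) = 0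
    (hadj : L' 0 (u 0) p₀ = 0)
    -- L(ε, ·, p₀) is C¹ along the segment from u₀ to u_ε, with derivative L'
    (hderiv : ∀ ε ∈ Set.Icc (0:ℝ) τ, ∀ s ∈ Set.Icc (0:ℝ) 1,
      HasFDerivAt (fun w => L ε w p₀) (L' ε (s • u ε + (1 - s) • u 0) p₀)
        (s • u ε + (1 - s) • u 0))
    (hcont : ∀ ε ∈ Set.Icc (0:ℝ) τ,
      ContinuousOn (fun s : ℝ => L' ε (s • u ε + (1 - s) • u 0) p₀) (Set.Icc 0 1))
    (R₁ R₂ dℓL : ℝ)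
    (hR₁ : Tendsto (fun ε => (1 / ℓ ε) *
        ∫ s in (0:ℝ)..1,
          (L' ε (s • u ε + (1 - s) • u 0) p₀ (u ε - u 0) - L' ε (u 0) p₀ (u ε - u 0)))
      (nhdsWithin 0 (Set.Ioi 0)) (nhds R₁))
    (hR₂ : Tendsto (fun ε => (1 / ℓ ε) *
        (L' ε (u 0) p₀ (u ε - u 0) - L' 0 (u 0) p₀ (u ε - u 0)))
      (nhdsWithin 0 (Set.Ioi 0)) (nhds R₂))
    (hdℓ : Tendsto (fun ε => (1 / ℓ ε) * (L ε (u 0) p₀ - L 0 (u 0) p₀))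
      (nhdsWithin 0 (Set.Ioi 0)) (nhds dℓL)) :
    (fun ε => j ε - j 0 - ℓ ε * (R₁ + R₂ + dℓL))
      =o[nhdsWithin 0 (Set.Ioi 0)] ℓ :=
  delfour_topological_expansion_general τ hτ ℓ hℓpos L L' u p₀ j hstate hadj hderiv hcont R₁ R₂ dℓL
    hR₁ hR₂ hdℓ
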